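/- arXiv:2005.02300 — 2 statements merged into one kernel-verified Lean document; each statement's English description precedes it below -/
import Mathlib

section
/- Let b̂ be a prime with b̂ > b. Then the set {2·b̂·i + (i² mod b̂) : i ∈ {1, ..., b}} is a Sidon set of size b, i.e., all its elements are distinct and all pairwise sums of its elements are distinct. -/
/-- For a prime `p > b`, the numbers `s i = 2*p*i + (i² mod p)`, `i ∈ {1,…,b}`,
are pairwise distinct and form a Sidon set: all pairwise sums are distinct. -/
theorem sidon_construction (b p : ℕ) (hp : p.Prime) (hbp : b < p) :
    (∀ i j, 1 ≤ i → i ≤ b → 1 ≤ j → j ≤ b →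
      2 * p * i + i ^ 2 % p = 2 * p * j + j ^ 2 % p → i = j) ∧
    (∀ i j k l, 1 ≤ i → i ≤ b → 1 ≤ j → j ≤ b → 1 ≤ k → k ≤ b → 1 ≤ l → l ≤ b →
      i ≤ j → k ≤ l →
      (2 * p * i + i ^ 2 % p) + (2 * p * j + j ^ 2 % p) =
        (2 * p * k + k ^ 2 % p) + (2 * p * l + l ^ 2 % p) →
      i = k ∧ j = l) := by
  have hp0 : 0 < p := hp.pos
  have haux : ∀ x r : ℕ, r < 2 * p → (2 * p * x + r) / (2 * p) = x := fun x r hr => by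
    rw [Nat.mul_add_div (by omega), Nat.div_eq_of_lt hr]; omega
  constructor
  · intro i j hi1 hib hj1 hjb h
    have hi : i ^ 2 % p < p := Nat.mod_lt _ hp0
    have hj : j ^ 2 % p < p := Nat.mod_lt _ hp0
    have h2 := congrArg (· / (2 * p)) h
    rwa [haux i _ (by omega), haux j _ (by omega)] at h2
  · intro i j k l hi1 hib hj1 hjb hk1 hkb hl1 hlb hij hkl h
    have hi : i ^ 2 % p < p := Nat.mod_lt _ hp0
    have hj : j ^ 2 % p < p := Nat.mod_lt _ hp0
    have hk : k ^ 2 % p < p := Nat.mod_lt _ hp0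
    have hl : l ^ 2 % p < p := Nat.mod_lt _ hp0
    have h' : 2 * p * (i + j) + (i ^ 2 % p + j ^ 2 % p)
        = 2 * p * (k + l) + (k ^ 2 % p + l ^ 2 % p) := by ring_nf; ring_nf at h; omega
    have hsum : i + j = k + l := by
      have h2 := congrArg (· / (2 * p)) h'
      rwa [haux (i+j) _ (by omega), haux (k+l) _ (by omega)] at h2
    have hrem : i ^ 2 % p + j ^ 2 % p = k ^ 2 % p + l ^ 2 % p := by
      rw [hsum] at h'; omega
    have hmod : (i ^ 2 + j ^ 2) % p = (k ^ 2 + l ^ 2) % p := by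
      rw [Nat.add_mod, Nat.add_mod (k^2), hrem]
    -- move to ℤ
    have hdvd : (p : ℤ) ∣ ((k:ℤ)^2 + (l:ℤ)^2) - ((i:ℤ)^2 + (j:ℤ)^2) := by
      have hm : ((i:ℤ)^2 + (j:ℤ)^2) % (p:ℤ) = ((k:ℤ)^2 + (l:ℤ)^2) % (p:ℤ) := by
        exact_mod_cast congrArg (Nat.cast : ℕ → ℤ) hmod
      exact Int.ModEq.dvd hm
    obtain ⟨t, ht⟩ := hdvd
    have hsum' : (i:ℤ) + j = (k:ℤ) + l := by exact_mod_cast hsum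
    have key : ((j:ℤ) - i)^2 - ((l:ℤ) - k)^2 = -(2 * ((p:ℤ) * t)) := by
      linear_combination (-2 : ℤ) * ht - ((i:ℤ)+j+k+l) * hsum'
    have hfac : (p:ℤ) ∣ (((j:ℤ)-i) - ((l:ℤ)-k)) * (((j:ℤ)-i) + ((l:ℤ)-k)) := by
      refine ⟨-2*t, ?_⟩; linear_combination key
    -- bounds
    have hu0 : (0:ℤ) ≤ (j:ℤ) - i := by
      have : (i:ℤ) ≤ j := by exact_mod_cast hij
      linarith
    have hv0 : (0:ℤ) ≤ (l:ℤ) - k := by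
      have : (k:ℤ) ≤ l := by exact_mod_cast hkl
      linarith
    have hub : (j:ℤ) - i ≤ (b:ℤ) - 1 := by
      have h1 : (j:ℤ) ≤ b := by exact_mod_cast hjb
      have h2 : (1:ℤ) ≤ i := by exact_mod_cast hi1
      linarith
    have hvb : (l:ℤ) - k ≤ (b:ℤ) - 1 := by
      have h1 : (l:ℤ) ≤ b := by exact_mod_cast hlb
      have h2 : (1:ℤ) ≤ k := by exact_mod_cast hk1
      linarith
    have hbpZ : (b:ℤ) < p := by exact_mod_cast hbp
    have hfin : (j:ℤ) - i = (l:ℤ) - k := by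
      rcases Int.Prime.dvd_mul' hp hfac with hd | hd
      · have : ((j:ℤ)-i) - ((l:ℤ)-k) = 0 :=
          Int.eq_zero_of_abs_lt_dvd hd (by rw [abs_lt]; constructor <;> linarith)
        linarith
      · -- p divides the sum u+v with 0 ≤ u+v ≤ 2b-2 < 2p
        obtain ⟨c, hc⟩ := hd
        have hc0 : c = 0 ∨ c = 1 := by
          have hp1 : (0:ℤ) < p := by exact_mod_cast hp0
          rcases lt_trichotomy c 0 with h0 | h0 | h0
          · have hneg : (p:ℤ) * c < 0 := mul_neg_of_pos_of_neg hp1 h0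
            exfalso; linarith
          · exact Or.inl h0
          · right
            by_contra hne
            have h2c : 2 ≤ c := by omega
            have : (p:ℤ) * 2 ≤ (p:ℤ) * c := mul_le_mul_of_nonneg_left h2c hp1.le
            exfalso; linarith
        rcases hc0 with rfl | rfl
        · simp at hc; linarith
        · -- sum = p : parity contradiction
          exfalso
          simp only [mul_one] at hc
          have hdiff : ((j:ℤ)-i) - ((l:ℤ)-k) = -2*t := by
            have hpne : (p:ℤ) ≠ 0 := by positivity
            have := key
            rw [show ((j:ℤ)-i)^2 - ((l:ℤ)-k)^2
                = (((j:ℤ)-i) - ((l:ℤ)-k)) * (((j:ℤ)-i) + ((l:ℤ)-k)) by ring, hc] at this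
            exact mul_right_cancel₀ hpne (by linarith [this])
          -- p = 2*(j-i) + 2*t  →  p even → p = 2 → contradiction with bounds
          have hpeq : (p:ℤ) = 2*((j:ℤ)-i) + 2*t := by linarith [hc, hdiff]
          have h2p : (2:ℤ) ∣ (p:ℤ) := ⟨(j:ℤ)-i + t, by linarith⟩
          have : p = 2 := by
            rcases (Nat.Prime.eq_one_or_self_of_dvd hp 2 (by exact_mod_cast h2p)) with h | h
            · omega
            · omega
          subst this
          -- then b = 1, so sum ≤ 0 but = 2
          have hb1 : b = 1 := by omega
          subst hb1
          have : i = 1 ∧ j = 1 ∧ k = 1 ∧ l = 1 := ⟨by omega, by omega, by omega, by omega⟩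
          obtain ⟨rfl, rfl, rfl, rfl⟩ := this
          norm_num at hc
    constructor
    · have : (i:ℤ) = k := by linarith
      exact_mod_cast this
    · have : (j:ℤ) = l := by linarith
      exact_mod_cast this
end

section
/- Let m, τ, k, n be natural numbers and suppose for each t ∈ {1,...,τ} and each candidate index i ∈ {1,...,m} a weight w_t(i) ∈ {0,...,n} is given. Define, for a subset F ⊆ {1,...,τ} (a candidate fingerprint), the incremental update of committee sizes, symmetric differences and scores: k'_t = k_t − 1 if t ∈ F else k_t; d'_t = d_t − 1 if exactly one of t, t+1 is in F else d_t; s'_t = s_t − w_t(i) if t ∈ F else s_t. Then: there exist committees C₁, ..., C_τ ⊆ {c₁,...,c_i} with |C_t| = k_t, |C_t △ C_{t+1}| = d_t, and score_t(C_t) = s_t, if and only if there exist a fingerprint F ⊆ {1,...,τ} and committees C'₁, ..., C'_τ ⊆ {c₁,...,c_{i−1}} with |C'_t| = k'_t, |C'_t △ C'_{t+1}| = d'_t, and score_t(C'_t) = s'_t (where w_t(i) = |u_t⁻¹(c_i)|), obtained by setting C_t = C'_t ∪ {c_i} for t ∈ F and C_t = C'_t otherwise. -/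
/-- The Plurality score of a committee `X` at stage `t`. -/
def score {A C : Type*} [Fintype A] [DecidableEq C]
    (u : ℕ → A → Option C) (t : ℕ) (X : Finset C) : ℕ :=
  (Finset.univ.filter fun a => ∃ c ∈ X, u t a = some c).card

private lemma score_insert {A C : Type*} [Fintype A] [DecidableEq C]
    (u : ℕ → A → Option C) (t : ℕ) (X : Finset C) (a : C) (ha : a ∉ X) :
    score u t (insert a X) =
      score u t X + (Finset.univ.filter fun b => u t b = some a).card := by
  classical
  unfold score
  rw [← Finset.card_union_of_disjoint, ← Finset.filter_or]
  · apply congrArg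
    apply Finset.filter_congr
    intro b _
    simp only [Finset.mem_insert]
    constructor
    · rintro ⟨c, (rfl | hc), hbc⟩
      · exact Or.inr hbc
      · exact Or.inl ⟨c, hc, hbc⟩
    · rintro (⟨c, hc, hbc⟩ | hba)
      · exact ⟨c, Or.inr hc, hbc⟩
      · exact ⟨a, Or.inl rfl, hba⟩
  · rw [Finset.disjoint_filter]
    rintro b _ ⟨c, hc, hbc⟩ hba
    rw [hba] at hbc
    exact ha (Option.some_injective _ hbc ▸ hc)

private lemma sd_erase {C : Type*} [DecidableEq C] (X Y : Finset C) (a : C) :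
    symmDiff (X.erase a) (Y.erase a) = (symmDiff X Y).erase a := by
  ext x
  by_cases hxa : x = a <;>
    simp [Finset.mem_symmDiff, Finset.mem_erase, hxa]

private lemma sd_insert_left {C : Type*} [DecidableEq C] (X Y : Finset C) (a : C)
    (haX : a ∉ X) (haY : a ∉ Y) :
    symmDiff (insert a X) Y = insert a (symmDiff X Y) := by
  ext x
  by_cases hxa : x = a <;>
    simp [Finset.mem_symmDiff, Finset.mem_insert, hxa, haX, haY]

private lemma sd_insert_both {C : Type*} [DecidableEq C] (X Y : Finset C) (a : C)
    (haX : a ∉ X) (haY : a ∉ Y) :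
    symmDiff (insert a X) (insert a Y) = symmDiff X Y := by
  ext x
  by_cases hxa : x = a <;>
    simp [Finset.mem_symmDiff, Finset.mem_insert, hxa, haX, haY]

/-- correctness invariant of the dynamic program. Over the candidates
`cand 1, …, cand m` (pairwise distinct) and a fixed index `i ∈ {1, …, m}`, there are
committees inside `{cand 1, …, cand i}` with prescribed sizes `kv`, consecutive symmetric
differences `dv` and scores `sv`, iff there are a fingerprint `F ⊆ {0, …, τ − 1}` and
committees inside `{cand 1, …, cand (i − 1)}` achieving the values decremented according
to `F` (by `1` for sizes, by `1` for symmetric differences when exactly one of `t, t + 1`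
lies in `F`, and by `w t = |u_t⁻¹(cand i)|` for scores), the former committees being
obtained from the latter by adding `cand i` at exactly the stages in `F`. -/
theorem dp_invariant {A C : Type*} [Fintype A] [DecidableEq C]
    (u : ℕ → A → Option C) (τ m i : ℕ) (cand : ℕ → C)
    (hinj : ∀ a b, 1 ≤ a → a ≤ m → 1 ≤ b → b ≤ m → cand a = cand b → a = b)
    (hi1 : 1 ≤ i) (him : i ≤ m) (kv dv sv : ℕ → ℕ) :
    (∃ Cs : ℕ → Finset C,
      (∀ t, t < τ → Cs t ⊆ (Finset.Icc 1 i).image cand ∧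
        (Cs t).card = kv t ∧ score u t (Cs t) = sv t) ∧
      (∀ t, t + 1 < τ → (symmDiff (Cs t) (Cs (t + 1))).card = dv t)) ↔
    (∃ F : Finset ℕ, F ⊆ Finset.range τ ∧
      ∃ Cs' : ℕ → Finset C,
        (∀ t, t < τ → Cs' t ⊆ (Finset.Icc 1 (i - 1)).image cand ∧
          (Cs' t).card + (if t ∈ F then 1 else 0) = kv t ∧
          score u t (Cs' t) +
            (if t ∈ F then
              (Finset.univ.filter fun a => u t a = some (cand i)).card
            else 0) = sv t) ∧
        (∀ t, t + 1 < τ →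
          (symmDiff (Cs' t) (Cs' (t + 1))).card +
            (if (t ∈ F) ≠ (t + 1 ∈ F) then 1 else 0) = dv t)) := by
  constructor
  · rintro ⟨Cs, h1, h2⟩
    refine ⟨(Finset.range τ).filter (fun t => cand i ∈ Cs t),
      Finset.filter_subset _ _, fun t => (Cs t).erase (cand i), ?_, ?_⟩
    · intro t ht
      dsimp only
      obtain ⟨hsub, hcard, hscore⟩ := h1 t ht
      have hmemF : (t ∈ (Finset.range τ).filter (fun t => cand i ∈ Cs t)) ↔
          cand i ∈ Cs t := by
        simp [Finset.mem_filter, Finset.mem_range, ht]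
      refine ⟨?_, ?_, ?_⟩
      · intro x hx
        obtain ⟨hxa, hxC⟩ := Finset.mem_erase.mp hx
        obtain ⟨j, hj, rfl⟩ := Finset.mem_image.mp (hsub hxC)
        obtain ⟨hj1, hj2⟩ := Finset.mem_Icc.mp hj
        have : j ≠ i := fun h => hxa (h ▸ rfl)
        exact Finset.mem_image.mpr ⟨j, Finset.mem_Icc.mpr ⟨hj1, by omega⟩, rfl⟩
      · by_cases hm : cand i ∈ Cs t
        · rw [if_pos (hmemF.mpr hm), Finset.card_erase_add_one hm]
          exact hcard
        · rw [if_neg (fun h => hm (hmemF.mp h)), Finset.erase_eq_of_notMem hm]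
          simpa using hcard
      · by_cases hm : cand i ∈ Cs t
        · rw [if_pos (hmemF.mpr hm)]
          have := score_insert u t ((Cs t).erase (cand i)) (cand i)
            (Finset.notMem_erase _ _)
          rw [Finset.insert_erase hm] at this
          rw [← this]; exact hscore
        · rw [if_neg (fun h => hm (hmemF.mp h)), Finset.erase_eq_of_notMem hm]
          simpa using hscore
    · intro t ht
      dsimp only
      have h2' := h2 t ht
      have hm1 : (t ∈ (Finset.range τ).filter (fun t => cand i ∈ Cs t)) ↔
          cand i ∈ Cs t := by
        simp [Finset.mem_filter, Finset.mem_range]; omega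
      have hm2 : (t + 1 ∈ (Finset.range τ).filter (fun t => cand i ∈ Cs t)) ↔
          cand i ∈ Cs (t + 1) := by
        simp [Finset.mem_filter, Finset.mem_range, ht]
      rw [sd_erase]
      by_cases hd : cand i ∈ symmDiff (Cs t) (Cs (t + 1))
      · have hne : (t ∈ (Finset.range τ).filter (fun t => cand i ∈ Cs t)) ≠
            (t + 1 ∈ (Finset.range τ).filter (fun t => cand i ∈ Cs t)) := by
          rw [Finset.mem_symmDiff] at hd
          simp only [ne_eq, eq_iff_iff, hm1, hm2]
          tauto
        rw [if_pos hne, Finset.card_erase_add_one hd]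
        exact h2'
      · have hne : ¬ ((t ∈ (Finset.range τ).filter (fun t => cand i ∈ Cs t)) ≠
            (t + 1 ∈ (Finset.range τ).filter (fun t => cand i ∈ Cs t))) := by
          rw [Finset.mem_symmDiff] at hd
          simp only [ne_eq, eq_iff_iff, hm1, hm2]
          tauto
        rw [if_neg hne, Finset.erase_eq_of_notMem hd]
        simpa using h2'
  · rintro ⟨F, hF, Cs', h1, h2⟩
    have hnotmem : ∀ t, t < τ → cand i ∉ Cs' t := by
      intro t ht hmem
      obtain ⟨j, hj, hji⟩ := Finset.mem_image.mp ((h1 t ht).1 hmem)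
      obtain ⟨hj1, hj2⟩ := Finset.mem_Icc.mp hj
      have := hinj j i hj1 (by omega) hi1 him hji
      omega
    refine ⟨fun t => if t ∈ F then insert (cand i) (Cs' t) else Cs' t, ?_, ?_⟩
    · intro t ht
      dsimp only
      obtain ⟨hsub, hcard, hscore⟩ := h1 t ht
      have hsub' : Cs' t ⊆ (Finset.Icc 1 i).image cand := by
        refine hsub.trans (Finset.image_subset_image ?_)
        exact Finset.Icc_subset_Icc le_rfl (by omega)
      by_cases hm : t ∈ F
      · rw [if_pos hm]
        refine ⟨?_, ?_, ?_⟩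
        · apply Finset.insert_subset
          · exact Finset.mem_image.mpr ⟨i, Finset.mem_Icc.mpr ⟨hi1, le_rfl⟩, rfl⟩
          · exact hsub'
        · rw [Finset.card_insert_of_notMem (hnotmem t ht)]
          simpa [hm] using hcard
        · rw [score_insert u t (Cs' t) (cand i) (hnotmem t ht)]
          simpa [hm] using hscore
      · rw [if_neg hm]
        exact ⟨hsub', by simpa [hm] using hcard, by simpa [hm] using hscore⟩
    · intro t ht
      dsimp only
      have h2' := h2 t ht
      have hn1 := hnotmem t (by omega)
      have hn2 := hnotmem (t + 1) ht
      have hnsd : cand i ∉ symmDiff (Cs' t) (Cs' (t + 1)) := by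
        simp [Finset.mem_symmDiff, hn1, hn2]
      by_cases hm1 : t ∈ F <;> by_cases hm2 : t + 1 ∈ F
      · rw [if_pos hm1, if_pos hm2, sd_insert_both _ _ _ hn1 hn2]
        simpa [hm1, hm2] using h2'
      · rw [if_pos hm1, if_neg hm2, sd_insert_left _ _ _ hn1 hn2,
          Finset.card_insert_of_notMem hnsd]
        simpa [hm1, hm2] using h2'
      · rw [if_neg hm1, if_pos hm2, symmDiff_comm, sd_insert_left _ _ _ hn2 hn1,
          Finset.card_insert_of_notMem (by rwa [symmDiff_comm]), symmDiff_comm]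
        simpa [hm1, hm2] using h2'
      · rw [if_neg hm1, if_neg hm2]
        simpa [hm1, hm2] using h2'
end
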